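/- arXiv:2310.01883 — 5 statements merged into one kernel-verified Lean document; each statement's English description precedes it below -/
import Mathlib

section
/- Let C₁, C₂ be disjoint nonempty finite sets of words in a mixed Hamming space, and suppose the minimum distance between C₁ and C₂ is d' > d ≥ 1. Then there exist w ∈ C₁, w' ∈ C₂ with d(w,w') = d', and for any coordinate j where w[j] ≠ w'[j], applying to every element of C₂ the transposition swapping the symbols w[j] and w'[j] at coordinate j produces a set C₂' such that the minimum distance between C₁ and C₂' is at least d' − 1, all pairwise distances within C₂' equal those within C₂, and d(w, σ(w')) = d' − 1. -/
/-!
Modifying one coordinate moves a word by Hamming distance at most one, so the cross distances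
drop by at most one. A permutation applied to the same coordinate of every word of `C₂` is an
isometry of the Hamming space, so distances within `C₂` are unchanged. Finally, the
transposition sends `w' j` to `w j`, which removes exactly one disagreement between `w` and `w'`.
-/

open Finset Function

section UpdateCoordinate

variable {ι : Type*} [Fintype ι] [DecidableEq ι] {β : ι → Type*} [∀ i, DecidableEq (β i)]

theorem hammingDist_update_self_le_one (x : ∀ i, β i) (j : ι) (a : β j) :
    hammingDist (update x j a) x ≤ 1 := by
  refine (card_le_card fun i hi => ?_).trans (card_singleton j).le
  by_contra hij
  exact (mem_filter.mp hi).2 (update_of_ne (mem_singleton.not.mp hij) a x)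

theorem hammingDist_le_hammingDist_update_add_one (x y : ∀ i, β i) (j : ι) (a : β j) :
    hammingDist x y ≤ hammingDist x (update y j a) + 1 :=
  (hammingDist_triangle x (update y j a) y).trans
    (Nat.add_le_add_left (hammingDist_update_self_le_one y j a) _)

theorem hammingDist_update_of_ne {x y : ∀ i, β i} {j : ι} (hj : x j ≠ y j) :
    hammingDist x (update y j (x j)) = hammingDist x y - 1 := by
  have hfilter : (univ.filter fun i => x i ≠ update y j (x j) i)
      = (univ.filter fun i => x i ≠ y i).erase j := by
    ext i
    by_cases hij : i = j
    · subst hij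
      simp
    · simp [hij]
  rw [hammingDist, hammingDist, hfilter, card_erase_of_mem (by simpa using hj)]

theorem hammingDist_update_perm {j : ι} (σ : Equiv.Perm (β j)) (x y : ∀ i, β i) :
    hammingDist (update x j (σ (x j))) (update y j (σ (y j))) = hammingDist x y := by
  unfold hammingDist
  congr 1
  ext i
  by_cases hij : i = j
  · subst hij
    simp
  · simp [hij]

end UpdateCoordinate

theorem closest_pair_swap_reduction_general {n : ℕ} (A : Fin n → Type)
    [∀ j, DecidableEq (A j)] (d' : ℕ)
    (C₁ C₂ : Finset (∀ j, A j))
    (hlow : ∀ w ∈ C₁, ∀ w' ∈ C₂, d' ≤ hammingDist w w')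
    (hach : ∃ w ∈ C₁, ∃ w' ∈ C₂, hammingDist w w' = d') :
    ∃ w ∈ C₁, ∃ w' ∈ C₂, hammingDist w w' = d' ∧
      ∀ j : Fin n, w j ≠ w' j →
        (∀ u ∈ C₁, ∀ v ∈ C₂,
          d' - 1 ≤ hammingDist u (Function.update v j (Equiv.swap (w j) (w' j) (v j)))) ∧
        (∀ v ∈ C₂, ∀ v' ∈ C₂,
          hammingDist (Function.update v j (Equiv.swap (w j) (w' j) (v j)))
              (Function.update v' j (Equiv.swap (w j) (w' j) (v' j)))
            = hammingDist v v') ∧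
        hammingDist w (Function.update w' j (Equiv.swap (w j) (w' j) (w' j))) = d' - 1 := by
  obtain ⟨w, hw, w', hw', hww'⟩ := hach
  refine ⟨w, hw, w', hw', hww', fun j hj => ⟨?_, ?_, ?_⟩⟩
  · intro u hu v hv
    have hmoved := hammingDist_le_hammingDist_update_add_one u v j (Equiv.swap (w j) (w' j) (v j))
    have := hlow u hu v hv
    omega
  · exact fun v _ v' _ => hammingDist_update_perm _ v v'
  · rw [Equiv.swap_apply_right, hammingDist_update_of_ne hj, hww']

/-- Let `C₁, C₂` be disjoint nonempty finite sets of words with cross minimum distance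
`d' > d ≥ 1`. Then there is a closest pair `w ∈ C₁`, `w' ∈ C₂` with `d(w,w') = d'`, and for
any coordinate `j` where they differ, the transposition `σ` swapping `w j` and `w' j` at
coordinate `j`, applied to `C₂`, keeps all cross distances ≥ d' − 1, preserves all pairwise
distances within `C₂`, and satisfies `d(w, σ w') = d' − 1`. -/
theorem closest_pair_swap_reduction {n : ℕ} (A : Fin n → Type) [∀ j, Fintype (A j)]
    [∀ j, DecidableEq (A j)] (d d' : ℕ) (hd : 1 ≤ d) (hdd' : d < d')
    (C₁ C₂ : Finset (∀ j, A j)) (hdisj : Disjoint C₁ C₂)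
    (h₁ : C₁.Nonempty) (h₂ : C₂.Nonempty)
    (hlow : ∀ w ∈ C₁, ∀ w' ∈ C₂, d' ≤ hammingDist w w')
    (hach : ∃ w ∈ C₁, ∃ w' ∈ C₂, hammingDist w w' = d') :
    ∃ w ∈ C₁, ∃ w' ∈ C₂, hammingDist w w' = d' ∧
      ∀ j : Fin n, w j ≠ w' j →
        (∀ u ∈ C₁, ∀ v ∈ C₂,
          d' - 1 ≤ hammingDist u (Function.update v j (Equiv.swap (w j) (w' j) (v j)))) ∧
        (∀ v ∈ C₂, ∀ v' ∈ C₂,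
          hammingDist (Function.update v j (Equiv.swap (w j) (w' j) (v j)))
              (Function.update v' j (Equiv.swap (w j) (w' j) (v' j)))
            = hammingDist v v') ∧
        hammingDist w (Function.update w' j (Equiv.swap (w j) (w' j) (w' j))) = d' - 1 :=
  closest_pair_swap_reduction_general A d' C₁ C₂ hlow hach
end

section
/- Every Hamming packing C (a finite code with minimum distance exactly d) in a mixed Hamming space can be transformed into a code C' of the same cardinality, with minimum pairwise distance at least d, such that the contact graph of C' (edges between codewords at distance exactly d) is connected. -/
/-- The contact graph of a code `C` with respect to distance `d`. -/
def contactGraph {n : ℕ} {A : Fin n → Type} [∀ j, DecidableEq (A j)]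
    (C : Finset (∀ j, A j)) (d : ℕ) : SimpleGraph C where
  Adj a b := a ≠ b ∧ hammingDist (a : ∀ j, A j) (b : ∀ j, A j) = d
  symm := by
    constructor
    rintro a b ⟨h1, h2⟩
    exact ⟨h1.symm, by rwa [hammingDist_comm]⟩
  loopless := ⟨fun a h => h.1 rfl⟩

/-!
While the contact graph is disconnected, pick a pair of codewords `u`, `v` in different
components at minimal distance `D > d`. Swapping the values `u i` and `v i` in `D - d`
coordinates `i` where `u` and `v` differ is an isometry of the Hamming space; applying it to
the component of `u` only keeps every distance inside either side, lowers cross distances by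
at most `D - d` (so they stay `≥ d`), and moves `u` to distance exactly `d` from `v`. Contact
edges survive and a new one joins two components, so the number of components drops.
-/

open Finset

section Coordinates

variable {ι : Type*} [Fintype ι] {β : ι → Type*} [∀ i, DecidableEq (β i)]

theorem hammingDist_piCongrRight {γ : ι → Type*} [∀ i, DecidableEq (γ i)]
    (σ : ∀ i, β i ≃ γ i) (x y : ∀ i, β i) :
    hammingDist (Equiv.piCongrRight σ x) (Equiv.piCongrRight σ y) = hammingDist x y := by
  simp only [hammingDist, Equiv.piCongrRight_apply, Pi.map_apply, (σ _).injective.ne_iff]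

theorem hammingDist_piCongrRight_self_le {σ : ∀ i, Equiv.Perm (β i)} {S : Finset ι}
    (hσ : ∀ i ∉ S, σ i = 1) (x : ∀ i, β i) :
    hammingDist (Equiv.piCongrRight σ x) x ≤ #S := by
  refine card_le_card fun i hi => ?_
  by_contra hiS
  simp [hσ i hiS] at hi

theorem hammingDist_piCongrRight_swap [DecidableEq ι] {S : Finset ι} {x y : ∀ i, β i}
    (hS : S ⊆ ({i | x i ≠ y i} : Finset ι)) :
    hammingDist (Equiv.piCongrRight
      (fun i => if i ∈ S then Equiv.swap (x i) (y i) else 1) x) y = hammingDist x y - #S := by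
  rw [hammingDist, hammingDist, ← card_sdiff_of_subset hS]
  congr 1
  ext i
  by_cases hi : i ∈ S <;> simp [hi]

variable {M : Set (∀ i, β i)} [DecidablePred (· ∈ M)] {σ : ∀ i, Equiv.Perm (β i)}

theorem hammingDist_piecewise_piCongrRight {x y : ∀ i, β i} (h : x ∈ M ↔ y ∈ M) :
    hammingDist (M.piecewise (Equiv.piCongrRight σ) id x)
      (M.piecewise (Equiv.piCongrRight σ) id y) = hammingDist x y := by
  by_cases hx : x ∈ M
  · simp [hx, h.1 hx, hammingDist_piCongrRight]
  · simp [hx, mt h.2 hx]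

theorem hammingDist_le_piecewise_piCongrRight_add {S : Finset ι} (hσ : ∀ i ∉ S, σ i = 1)
    (x y : ∀ i, β i) :
    hammingDist x y ≤ hammingDist (M.piecewise (Equiv.piCongrRight σ) id x)
      (M.piecewise (Equiv.piCongrRight σ) id y) + #S := by
  by_cases h : x ∈ M ↔ y ∈ M
  · simp [hammingDist_piecewise_piCongrRight h]
  wlog hx : x ∈ M generalizing x y
  · rw [hammingDist_comm x, hammingDist_comm (M.piecewise (Equiv.piCongrRight σ) id x)]
    exact this y x (fun h' => h h'.symm) (by tauto)
  have hy : y ∉ M := fun hy => h (iff_of_true hx hy)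
  calc hammingDist x y
      ≤ hammingDist (Equiv.piCongrRight σ x) x + hammingDist (Equiv.piCongrRight σ x) y := by
        rw [hammingDist_comm _ x]; exact hammingDist_triangle _ _ _
    _ ≤ _ := by
        rw [Set.piecewise_eq_of_mem _ _ _ hx, Set.piecewise_eq_of_notMem _ _ _ hy, id]
        have := hammingDist_piCongrRight_self_le hσ x
        omega

end Coordinates

namespace SimpleGraph

theorem exists_not_reachable_forall_le {V α : Type*} [Finite V] [LinearOrder α]
    {G : SimpleGraph V} (hG : ¬ G.Preconnected) (w : V → V → α) :
    ∃ u v, ¬ G.Reachable u v ∧ ∀ x y, ¬ G.Reachable x y → w u v ≤ w x y := by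
  obtain ⟨x, hx⟩ := not_forall.1 hG
  obtain ⟨y, hxy⟩ := not_forall.1 hx
  obtain ⟨⟨u, v⟩, huv, hmin⟩ := Set.exists_min_image {p : V × V | ¬ G.Reachable p.1 p.2}
    (fun p => w p.1 p.2) (Set.toFinite _) ⟨(x, y), hxy⟩
  exact ⟨u, v, huv, fun x y h => hmin (x, y) h⟩

theorem card_connectedComponent_lt_of_surjective {V W : Type*} [Finite V] {G : SimpleGraph V}
    {G' : SimpleGraph W} (φ : G →g G') (hφ : Function.Surjective φ) {u v : V}
    (huv : ¬ G.Reachable u v) (hφuv : G'.Reachable (φ u) (φ v)) :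
    Nat.card G'.ConnectedComponent < Nat.card G.ConnectedComponent := by
  have hsurj : Function.Surjective (ConnectedComponent.map φ) := by
    rintro ⟨w⟩
    obtain ⟨x, rfl⟩ := hφ w
    exact ⟨G.connectedComponentMk x, rfl⟩
  refine lt_of_not_ge fun hle => huv ?_
  refine ConnectedComponent.exact ((hsurj.bijective_of_nat_card_le hle).1 ?_)
  simpa [ConnectedComponent.map_mk] using hφuv

end SimpleGraph

section ContactGraph

variable {n : ℕ} {A : Fin n → Type} [∀ j, DecidableEq (A j)] {d : ℕ}

theorem card_connectedComponent_contactGraph_image_lt {C : Finset (∀ j, A j)}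
    {f : (∀ j, A j) → ∀ j, A j} (hf : Set.InjOn f C)
    (hadj : ∀ x y : C, (contactGraph C d).Adj x y → hammingDist (f x) (f y) = d)
    {u v : C} (huv : ¬ (contactGraph C d).Reachable u v) (hfuv : hammingDist (f u) (f v) = d) :
    Nat.card (contactGraph (C.image f) d).ConnectedComponent <
      Nat.card (contactGraph C d).ConnectedComponent := by
  have hne : ∀ x y : C, x ≠ y → f x ≠ f y := fun x y hxy h =>
    hxy (Subtype.ext (hf x.2 y.2 h))
  let φ : contactGraph C d →g contactGraph (C.image f) d :=
    { toFun := fun x => ⟨f x, mem_image_of_mem f x.2⟩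
      map_rel' := fun {x y} h => ⟨fun h' => hne x y h.1 (congrArg Subtype.val h'), hadj x y h⟩ }
  refine SimpleGraph.card_connectedComponent_lt_of_surjective φ ?_ huv ?_
  · rintro ⟨w, hw⟩
    obtain ⟨x, hx, rfl⟩ := mem_image.1 hw
    exact ⟨⟨x, hx⟩, rfl⟩
  · refine SimpleGraph.Adj.reachable ⟨fun h => ?_, hfuv⟩
    exact hne u v (fun h' => huv (h' ▸ .rfl)) (congrArg Subtype.val h)

theorem lt_hammingDist_of_not_reachable_contactGraph {C : Finset (∀ j, A j)}
    (hC : (C : Set (∀ j, A j)).Pairwise fun a b => d ≤ hammingDist a b) {x y : C}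
    (hxy : ¬ (contactGraph C d).Reachable x y) : d < hammingDist (x : ∀ j, A j) y := by
  have hne : x ≠ y := fun h => hxy (h ▸ .rfl)
  refine (hC x.2 y.2 (Subtype.coe_ne_coe.2 hne)).lt_of_ne fun h => hxy ?_
  exact SimpleGraph.Adj.reachable ⟨hne, h.symm⟩

theorem exists_packing_card_connectedComponent_lt (hd : 0 < d) {C : Finset (∀ j, A j)}
    (hC : (C : Set (∀ j, A j)).Pairwise fun a b => d ≤ hammingDist a b)
    (hG : ¬ (contactGraph C d).Preconnected) :
    ∃ C' : Finset (∀ j, A j), #C' = #C ∧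
      (C' : Set (∀ j, A j)).Pairwise (fun a b => d ≤ hammingDist a b) ∧
      Nat.card (contactGraph C' d).ConnectedComponent <
        Nat.card (contactGraph C d).ConnectedComponent := by
  classical
  set G := contactGraph C d
  obtain ⟨u, v, huv, hmin⟩ := SimpleGraph.exists_not_reachable_forall_le hG
    fun x y : C => hammingDist (x : ∀ j, A j) y
  have hd_lt := lt_hammingDist_of_not_reachable_contactGraph hC huv
  obtain ⟨S, hS, hScard⟩ :=
    exists_subset_card_eq (s := {j | (u : ∀ j, A j) j ≠ (v : ∀ j, A j) j})
      (n := hammingDist (u : ∀ j, A j) v - d) (Nat.sub_le _ _)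
  set σ : ∀ j, Equiv.Perm (A j) := fun j => if j ∈ S then Equiv.swap (u.1 j) (v.1 j) else 1
  have hσ : ∀ j ∉ S, σ j = 1 := fun j hj => if_neg hj
  set M : Set (∀ j, A j) := Subtype.val '' {x | G.Reachable x u}
  have hM : ∀ x : C, (x : ∀ j, A j) ∈ M ↔ G.Reachable x u := fun x =>
    Subtype.val_injective.mem_set_image
  set f := M.piecewise (Equiv.piCongrRight σ) id
  have hsame : ∀ x y : C, G.Reachable x y →
      hammingDist (f x) (f y) = hammingDist (x : ∀ j, A j) y := fun x y hxy =>
    hammingDist_piecewise_piCongrRight (by rw [hM, hM]; exact ⟨hxy.symm.trans, hxy.trans⟩)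
  -- Cross distances are at least `hammingDist u v = d + #S` by the choice of `u` and `v`.
  have hpack : (C : Set (∀ j, A j)).Pairwise fun x y => d ≤ hammingDist (f x) (f y) := by
    intro x hx y hy hxy
    by_cases hr : G.Reachable ⟨x, hx⟩ ⟨y, hy⟩
    · exact hsame _ _ hr ▸ hC hx hy hxy
    · have hux : hammingDist (u : ∀ j, A j) v ≤ hammingDist x y := hmin _ _ hr
      have hxy : hammingDist x y ≤ hammingDist (f x) (f y) + #S :=
        hammingDist_le_piecewise_piCongrRight_add hσ x y
      omega
  have hinj : Set.InjOn f C := fun x hx y hy hfxy => by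
    by_contra hxy
    have hdist : d ≤ hammingDist (f x) (f y) := hpack hx hy hxy
    rw [hfxy, hammingDist_self] at hdist
    omega
  have hfuv : hammingDist (f u) (f v) = d := by
    have hfu : f u = Equiv.piCongrRight σ u := Set.piecewise_eq_of_mem _ _ _ ((hM u).2 .rfl)
    have hfv : f v = v := Set.piecewise_eq_of_notMem _ _ _ fun h => huv ((hM v).1 h).symm
    rw [hfu, hfv, hammingDist_piCongrRight_swap hS]
    omega
  refine ⟨C.image f, card_image_of_injOn hinj, ?_, ?_⟩
  · rwa [coe_image, hinj.pairwise_image]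
  · refine card_connectedComponent_contactGraph_image_lt hinj (fun x y hxy => ?_) huv hfuv
    exact (hsame x y hxy.reachable).trans hxy.2

theorem exists_packing_preconnected_contactGraph (hd : 0 < d) (C : Finset (∀ j, A j))
    (hC : (C : Set (∀ j, A j)).Pairwise fun a b => d ≤ hammingDist a b) :
    ∃ C' : Finset (∀ j, A j), #C' = #C ∧
      (C' : Set (∀ j, A j)).Pairwise (fun a b => d ≤ hammingDist a b) ∧
      (contactGraph C' d).Preconnected := by
  induction hk : Nat.card (contactGraph C d).ConnectedComponent using Nat.strong_induction_on
    generalizing C with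
  | _ k ih =>
    by_cases hpre : (contactGraph C d).Preconnected
    · exact ⟨C, rfl, hC, hpre⟩
    obtain ⟨C', hcard, hC', hlt⟩ := exists_packing_card_connectedComponent_lt hd hC hpre
    obtain ⟨C'', hcard', hC'', hpre''⟩ := ih _ (hk ▸ hlt) C' hC' rfl
    exact ⟨C'', hcard'.trans hcard, hC'', hpre''⟩

end ContactGraph

theorem exists_equivalent_packing_connected_contactGraph_general {n : ℕ} (A : Fin n → Type)
    [∀ j, DecidableEq (A j)] (d : ℕ) (C : Finset (∀ j, A j))
    (hmin : ∀ a ∈ C, ∀ b ∈ C, a ≠ b → d ≤ hammingDist a b)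
    (hsharp : ∃ a ∈ C, ∃ b ∈ C, a ≠ b ∧ hammingDist a b = d) :
    ∃ C' : Finset (∀ j, A j), C'.card = C.card ∧
      (∀ a ∈ C', ∀ b ∈ C', a ≠ b → d ≤ hammingDist a b) ∧
      (contactGraph C' d).Connected := by
  obtain ⟨a, ha, b, -, hab, rfl⟩ := hsharp
  obtain ⟨C', hcard, hC', hpre⟩ :=
    exists_packing_preconnected_contactGraph (hammingDist_pos.2 hab) C hmin
  have hne : Nonempty C' := (card_pos.1 (hcard ▸ card_pos.2 ⟨a, ha⟩)).coe_sort
  exact ⟨C', hcard, hC', SimpleGraph.connected_iff _ |>.2 ⟨hpre, hne⟩⟩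

/-- Every Hamming packing `C` with minimum distance exactly `d` can be transformed into a
code `C'` of the same cardinality and minimum distance ≥ d whose contact graph is connected. -/
theorem exists_equivalent_packing_connected_contactGraph {n : ℕ} (A : Fin n → Type)
    [∀ j, Fintype (A j)] [∀ j, DecidableEq (A j)] (d : ℕ) (C : Finset (∀ j, A j))
    (hmin : ∀ a ∈ C, ∀ b ∈ C, a ≠ b → d ≤ hammingDist a b)
    (hsharp : ∃ a ∈ C, ∃ b ∈ C, a ≠ b ∧ hammingDist a b = d) :
    ∃ C' : Finset (∀ j, A j), C'.card = C.card ∧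
      (∀ a ∈ C', ∀ b ∈ C', a ≠ b → d ≤ hammingDist a b) ∧
      (contactGraph C' d).Connected :=
  exists_equivalent_packing_connected_contactGraph_general A d C hmin hsharp
end

section
/- Any code C in the binary-ternary mixed space (Fin 2)^4 × (Fin 3)^3 with minimum Hamming distance at least 3 and |C| ≥ 17 contains two codewords w, w' with d(w,w') = 3 and d^t(w,w') = 3, i.e., they agree on all binary coordinates and differ in all three ternary coordinates. -/
theorem hammingDist_eq_card_of_card_le {ι : Type*} [Fintype ι] {β : ι → Type*}
    [∀ i, DecidableEq (β i)] {x y : ∀ i, β i} (h : Fintype.card ι ≤ hammingDist x y) :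
    hammingDist x y = Fintype.card ι :=
  le_antisymm hammingDist_le_card_fintype h

/-- Any code in `(Fin 2)^4 × (Fin 3)^3` with minimum Hamming distance ≥ 3 and at least 17
codewords contains two codewords at distance exactly 3 that agree on all binary coordinates
and differ in all three ternary coordinates. -/
theorem exists_ternary_contact_pair (C : Finset ((Fin 4 → Fin 2) × (Fin 3 → Fin 3)))
    (hmin : ∀ a ∈ C, ∀ b ∈ C, a ≠ b → 3 ≤ hammingDist a.1 b.1 + hammingDist a.2 b.2)
    (hcard : 17 ≤ C.card) :
    ∃ w ∈ C, ∃ w' ∈ C, w ≠ w' ∧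
      hammingDist w.1 w'.1 + hammingDist w.2 w'.2 = 3 ∧
      w.1 = w'.1 ∧ hammingDist w.2 w'.2 = 3 := by
  -- Pigeonhole: only `2 ^ 4 = 16` binary parts are available.
  have hbinary : (Finset.univ : Finset (Fin 4 → Fin 2)).card < C.card := by
    simp only [Finset.card_univ, Fintype.card_pi, Fintype.card_fin, Finset.prod_const]
    omega
  obtain ⟨w, hw, w', hw', hne, hfst⟩ :=
    Finset.exists_ne_map_eq_of_card_lt_of_maps_to hbinary (f := Prod.fst)
      (fun _ _ => Finset.mem_univ _)
  have hdist := hmin w hw w' hw' hne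
  rw [hfst, hammingDist_self, zero_add] at hdist
  have hsnd : hammingDist w.2 w'.2 = 3 := by
    simpa using hammingDist_eq_card_of_card_le (x := w.2) (y := w'.2) (by simpa using hdist)
  refine ⟨w, hw, w', hw', hne, ?_, hfst, hsnd⟩
  rw [hfst, hammingDist_self, hsnd]
end

section
/- Let C be a code in a mixed Hamming space with minimum distance ≥ d. If C is partitioned into nonempty sets C₁ and C₂ with d(C₁, C₂) > d, then after applying a coordinate-symbol transposition to all of C₂ as in the contact-graph algorithm (swapping symbols w[j] and w'[j] at a coordinate j where a closest pair w ∈ C₁, w' ∈ C₂ differs), the union C₁ ∪ σ(C₂) still has minimum distance ≥ d and cardinality |C|. -/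
/-!
The transposition acts on the single coordinate `j` by a permutation of its alphabet, so it is an
isometry of the Hamming space that moves every word by at most one. Distances inside `C₁` and
inside `σ(C₂)` are therefore unchanged, while cross distances drop from at least `d + 1` to at
least `d ≥ 1`; in particular `C₁` and `σ(C₂)` stay disjoint and no word is lost.
-/

open Function

section HammingUpdate

variable {ι : Type*} [Fintype ι] [DecidableEq ι] {β : ι → Type*} [∀ i, DecidableEq (β i)]

theorem hammingDist_update_le_one (v : ∀ i, β i) (j : ι) (x : β j) :
    hammingDist v (update v j x) ≤ 1 := by
  have hsupp : ∀ i, v i ≠ update v j x i → i = j := fun i hi =>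
    by_contra fun h => hi (update_of_ne h x v).symm
  refine Finset.card_le_one.mpr fun a ha b hb => ?_
  simp only [Finset.mem_filter, Finset.mem_univ, true_and] at ha hb
  exact (hsupp a ha).trans (hsupp b hb).symm

theorem hammingDist_update_apply {j : ι} {f : β j → β j} (hf : Injective f) (u v : ∀ i, β i) :
    hammingDist (update u j (f (u j))) (update v j (f (v j))) = hammingDist u v := by
  set g : ∀ i, β i → β i := update (fun _ => id) j f
  have hg : ∀ i, Injective (g i) := fun i => by
    rcases eq_or_ne i j with rfl | h
    · simpa [g] using hf
    · simpa [g, update_of_ne h] using injective_id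
  have hupdate : ∀ x : ∀ i, β i, update x j (f (x j)) = fun i => g i (x i) := fun x => by
    funext i
    rcases eq_or_ne i j with rfl | h
    · simp [g]
    · simp [g, update_of_ne h]
  rw [hupdate, hupdate, hammingDist_comp g hg]

end HammingUpdate

section CodeTransform

variable {ι : Type*} [Fintype ι] {β : ι → Type*} [∀ i, DecidableEq (β i)]
  {σ : (∀ i, β i) → ∀ i, β i} {d : ℕ} {C₁ C₂ : Finset (∀ i, β i)}

theorem le_hammingDist_of_lt_of_hammingDist_le_one (hσ : ∀ v, hammingDist v (σ v) ≤ 1)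
    {u v : ∀ i, β i} (huv : d < hammingDist u v) : d ≤ hammingDist u (σ v) := by
  have htri := hammingDist_triangle u (σ v) v
  rw [hammingDist_comm (σ v)] at htri
  have hmove := hσ v
  omega

theorem injective_of_forall_hammingDist_eq
    (hσ : ∀ u v, hammingDist (σ u) (σ v) = hammingDist u v) : Injective σ :=
  fun u v h => hammingDist_eq_zero.mp (by rw [← hσ, h, hammingDist_self])

theorem Finset.card_union_image_eq_of_isometry [DecidableEq (∀ i, β i)]
    (hσ : ∀ u v, hammingDist (σ u) (σ v) = hammingDist u v) (hσ₁ : ∀ v, hammingDist v (σ v) ≤ 1)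
    (hd : 1 ≤ d) (hdisj : Disjoint C₁ C₂) (hcross : ∀ u ∈ C₁, ∀ v ∈ C₂, d < hammingDist u v) :
    (C₁ ∪ C₂.image σ).card = (C₁ ∪ C₂).card := by
  have hdisj' : Disjoint C₁ (C₂.image σ) := by
    refine Finset.disjoint_left.mpr fun a ha hav => ?_
    obtain ⟨v, hv, rfl⟩ := Finset.mem_image.mp hav
    have := le_hammingDist_of_lt_of_hammingDist_le_one hσ₁ (hcross _ ha v hv)
    rw [hammingDist_self] at this
    omega
  rw [Finset.card_union_of_disjoint hdisj', Finset.card_union_of_disjoint hdisj,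
    Finset.card_image_of_injective _ (injective_of_forall_hammingDist_eq hσ)]

theorem Finset.pairwise_union_image_of_isometry [DecidableEq (∀ i, β i)]
    (hσ : ∀ u v, hammingDist (σ u) (σ v) = hammingDist u v) (hσ₁ : ∀ v, hammingDist v (σ v) ≤ 1)
    (hmin : (↑(C₁ ∪ C₂) : Set (∀ i, β i)).Pairwise fun a b => d ≤ hammingDist a b)
    (hcross : ∀ u ∈ C₁, ∀ v ∈ C₂, d < hammingDist u v) :
    (↑(C₁ ∪ C₂.image σ) : Set (∀ i, β i)).Pairwise fun a b => d ≤ hammingDist a b := by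
  have hinj := injective_of_forall_hammingDist_eq hσ
  rw [Finset.coe_union, Set.pairwise_union] at hmin
  rw [Finset.coe_union, Finset.coe_image, Set.pairwise_union, hinj.injOn.pairwise_image]
  refine ⟨hmin.1, fun u hu v hv huv => ?_, ?_⟩
  · simpa only [onFun, hσ] using hmin.2.1 hu hv huv
  · rintro u hu _ ⟨v, hv, rfl⟩ -
    have := le_hammingDist_of_lt_of_hammingDist_le_one hσ₁ (hcross u hu v hv)
    exact ⟨this, hammingDist_comm u (σ v) ▸ this⟩

end CodeTransform

theorem swap_step_preserves_code_general {n : ℕ} (A : Fin n → Type) [∀ j, Fintype (A j)]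
    [∀ j, DecidableEq (A j)] (d d' : ℕ) (hd : 1 ≤ d) (hdd' : d < d')
    (C₁ C₂ : Finset (∀ j, A j)) (hdisj : Disjoint C₁ C₂)
    (hmin : ∀ a ∈ C₁ ∪ C₂, ∀ b ∈ C₁ ∪ C₂, a ≠ b → d ≤ hammingDist a b)
    (hlow : ∀ u ∈ C₁, ∀ v ∈ C₂, d' ≤ hammingDist u v)
    (w : ∀ j, A j) (w' : ∀ j, A j) (j : Fin n) :
    (C₁ ∪ C₂.image (fun v => Function.update v j (Equiv.swap (w j) (w' j) (v j)))).card
        = (C₁ ∪ C₂).card ∧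
    ∀ a ∈ C₁ ∪ C₂.image (fun v => Function.update v j (Equiv.swap (w j) (w' j) (v j))),
      ∀ b ∈ C₁ ∪ C₂.image (fun v => Function.update v j (Equiv.swap (w j) (w' j) (v j))),
        a ≠ b → d ≤ hammingDist a b := by
  have hσ (u v : ∀ j, A j) := hammingDist_update_apply (Equiv.swap (w j) (w' j)).injective u v
  have hσ₁ (v : ∀ j, A j) := hammingDist_update_le_one v j (Equiv.swap (w j) (w' j) (v j))
  have hcross : ∀ u ∈ C₁, ∀ v ∈ C₂, d < hammingDist u v := fun u hu v hv =>
    hdd'.trans_le (hlow u hu v hv)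
  exact ⟨Finset.card_union_image_eq_of_isometry hσ hσ₁ hd hdisj hcross,
    Finset.pairwise_union_image_of_isometry hσ hσ₁ hmin hcross⟩

/-- If a code `C₁ ⊎ C₂` has minimum distance ≥ d and the cross distance between `C₁` and
`C₂` exceeds `d`, then applying to all of `C₂` the transposition swapping the symbols
`w j` and `w' j` at a coordinate `j` where a closest cross pair `w ∈ C₁`, `w' ∈ C₂`
differs preserves the cardinality and keeps minimum distance ≥ d. -/
theorem swap_step_preserves_code {n : ℕ} (A : Fin n → Type) [∀ j, Fintype (A j)]
    [∀ j, DecidableEq (A j)] (d d' : ℕ) (hd : 1 ≤ d) (hdd' : d < d')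
    (C₁ C₂ : Finset (∀ j, A j)) (hdisj : Disjoint C₁ C₂)
    (h₁ : C₁.Nonempty) (h₂ : C₂.Nonempty)
    (hmin : ∀ a ∈ C₁ ∪ C₂, ∀ b ∈ C₁ ∪ C₂, a ≠ b → d ≤ hammingDist a b)
    (hlow : ∀ u ∈ C₁, ∀ v ∈ C₂, d' ≤ hammingDist u v)
    (w : ∀ j, A j) (hw : w ∈ C₁) (w' : ∀ j, A j) (hw' : w' ∈ C₂)
    (hww' : hammingDist w w' = d') (j : Fin n) (hj : w j ≠ w' j) :
    (C₁ ∪ C₂.image (fun v => Function.update v j (Equiv.swap (w j) (w' j) (v j)))).card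
        = (C₁ ∪ C₂).card ∧
    ∀ a ∈ C₁ ∪ C₂.image (fun v => Function.update v j (Equiv.swap (w j) (w' j) (v j))),
      ∀ b ∈ C₁ ∪ C₂.image (fun v => Function.update v j (Equiv.swap (w j) (w' j) (v j))),
        a ≠ b → d ≤ hammingDist a b :=
  swap_step_preserves_code_general A d d' hd hdd' C₁ C₂ hdisj hmin hlow w w' j
end

section
/- In the mixed space Fin 3 × (Fin 2)^7 with distance d = 3, any code of minimum distance ≥ 3 in which no two codewords w, w' satisfy d(w,w') = 3 with all 3 disagreements in binary coordinates has cardinality at most 24. (Computational bound; the relaxed constraint graph's independence number is 24.) -/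
/-!
Two codewords with the same ternary symbol are at binary distance at least 3, and distance exactly 3
is forbidden for them, so each of the three fibres of the projection to the ternary coordinate is a
binary code of length 7 and minimum distance 4. Plotkin's double-counting bound
`2d(M - 1) ≤ nM` then gives at most 8 codewords per fibre, hence at most 24 in all.
-/

open Finset

section Plotkin

variable {ι : Type*} [Fintype ι]

lemma sum_hammingDist_eq_sum_card_filter_ne {β : Type*} [DecidableEq β]
    (T : Finset ((ι → β) × (ι → β))) :
    ∑ q ∈ T, hammingDist q.1 q.2 = ∑ i, #{q ∈ T | q.1 i ≠ q.2 i} := by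
  simp only [hammingDist, card_filter]
  exact sum_comm

lemma two_mul_card_filter_ne_le {α : Type*} (S : Finset α) (f : α → Fin 2) :
    2 * #{q ∈ S ×ˢ S | f q.1 ≠ f q.2} ≤ #S * #S := by
  classical
  set S₀ := S.filter (f · = 0)
  set S₁ := S.filter (f · ≠ 0)
  have hsplit : (S ×ˢ S).filter (fun q => f q.1 ≠ f q.2) = S₀ ×ˢ S₁ ∪ S₁ ×ˢ S₀ := by
    ext ⟨x, y⟩
    simp only [S₀, S₁, mem_filter, mem_union, mem_product]
    generalize f x = a, f y = b
    fin_cases a <;> fin_cases b <;> simp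
  have hdisj : Disjoint (S₀ ×ˢ S₁) (S₁ ×ˢ S₀) :=
    disjoint_product.2 (Or.inl (disjoint_filter_filter_not S S _))
  have hcard : #S₀ + #S₁ = #S := card_filter_add_card_filter_not _
  rw [hsplit, card_union_of_disjoint hdisj, card_product, card_product, ← hcard]
  nlinarith [sq_nonneg ((#S₀ : ℤ) - #S₁)]

lemma two_mul_sum_hammingDist_le (S : Finset (ι → Fin 2)) :
    2 * ∑ q ∈ S ×ˢ S, hammingDist q.1 q.2 ≤ Fintype.card ι * (#S * #S) := by
  rw [sum_hammingDist_eq_sum_card_filter_ne, mul_sum]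
  calc ∑ i, 2 * #{q ∈ S ×ˢ S | q.1 i ≠ q.2 i}
      ≤ ∑ _i : ι, #S * #S := sum_le_sum fun i _ => two_mul_card_filter_ne_le S (· i)
    _ = Fintype.card ι * (#S * #S) := by rw [sum_const, card_univ, smul_eq_mul]

lemma mul_card_offDiag_le_sum_hammingDist {β : Type*} [DecidableEq β] {d : ℕ}
    (S : Finset (ι → β)) (hS : ∀ x ∈ S, ∀ y ∈ S, x ≠ y → d ≤ hammingDist x y) :
    d * #S.offDiag ≤ ∑ q ∈ S ×ˢ S, hammingDist q.1 q.2 :=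
  calc d * #S.offDiag = ∑ _q ∈ S.offDiag, d := by rw [sum_const, smul_eq_mul, mul_comm]
    _ ≤ ∑ q ∈ S.offDiag, hammingDist q.1 q.2 := sum_le_sum fun q hq => by
        obtain ⟨hx, hy, hxy⟩ := mem_offDiag.1 hq
        exact hS _ hx _ hy hxy
    _ ≤ ∑ q ∈ S ×ˢ S, hammingDist q.1 q.2 :=
        sum_le_sum_of_subset (fun q hq => by
          obtain ⟨hx, hy, -⟩ := mem_offDiag.1 hq
          exact mem_product.2 ⟨hx, hy⟩)

theorem plotkin_bound {d : ℕ} (S : Finset (ι → Fin 2))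
    (hS : ∀ x ∈ S, ∀ y ∈ S, x ≠ y → d ≤ hammingDist x y) :
    2 * d * (#S - 1) ≤ Fintype.card ι * #S := by
  rcases Nat.eq_zero_or_pos #S with h0 | hpos
  · simp [h0]
  have hlow := mul_card_offDiag_le_sum_hammingDist S hS
  have hup := two_mul_sum_hammingDist_le S
  rw [offDiag_card, ← Nat.mul_sub_one] at hlow
  refine Nat.le_of_mul_le_mul_left ?_ hpos
  calc #S * (2 * d * (#S - 1)) = 2 * (d * (#S * (#S - 1))) := by ring
    _ ≤ Fintype.card ι * (#S * #S) := le_trans (Nat.mul_le_mul_left 2 hlow) hup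
    _ = #S * (Fintype.card ι * #S) := by ring

lemma plotkin_bound_filter_fst_eq {κ : Type*} [DecidableEq κ] {d : ℕ}
    (C : Finset (κ × (ι → Fin 2))) (t : κ)
    (hC : ∀ a ∈ C, ∀ b ∈ C, a ≠ b → a.1 = b.1 → d ≤ hammingDist a.2 b.2) :
    2 * d * (#{a ∈ C | a.1 = t} - 1) ≤ Fintype.card ι * #{a ∈ C | a.1 = t} := by
  set F := C.filter (·.1 = t)
  have hF : ∀ a ∈ F, a ∈ C ∧ a.1 = t := fun a ha => mem_filter.1 ha
  have hinj : Set.InjOn Prod.snd (F : Set (κ × (ι → Fin 2))) := fun a ha b hb hab =>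
    Prod.ext ((hF a ha).2.trans (hF b hb).2.symm) hab
  rw [← card_image_of_injOn hinj]
  refine plotkin_bound _ ?_
  simp only [mem_image]
  rintro _ ⟨a, ha, rfl⟩ _ ⟨b, hb, rfl⟩ hab
  exact hC a (hF a ha).1 b (hF b hb).1 (fun h => hab (congrArg Prod.snd h))
    ((hF a ha).2.trans (hF b hb).2.symm)

end Plotkin

/-- In `Fin 3 × (Fin 2)^7` with `d = 3`: any code of minimum distance ≥ 3 with no pair of
codewords at distance exactly 3 whose 3 disagreements are all at binary coordinates has at
most 24 codewords. -/
theorem card_le_24_of_no_binary_contact_pair (C : Finset (Fin 3 × (Fin 7 → Fin 2)))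
    (hmin : ∀ a ∈ C, ∀ b ∈ C, a ≠ b →
      3 ≤ (if a.1 = b.1 then 0 else 1) + hammingDist a.2 b.2)
    (hno : ∀ a ∈ C, ∀ b ∈ C,
      ¬ ((if a.1 = b.1 then 0 else 1) + hammingDist a.2 b.2 = 3 ∧
          hammingDist a.2 b.2 = 3)) :
    C.card ≤ 24 := by
  have hfiber_dist : ∀ a ∈ C, ∀ b ∈ C, a ≠ b → a.1 = b.1 → 4 ≤ hammingDist a.2 b.2 := by
    intro a ha b hb hab h
    have h3 := hmin a ha b hb hab
    have hne3 := hno a ha b hb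
    simp only [h, if_true, zero_add, and_self] at h3 hne3
    omega
  have hfiber : ∀ t : Fin 3, #{a ∈ C | a.1 = t} ≤ 8 := fun t => by
    have := plotkin_bound_filter_fst_eq C t hfiber_dist
    simp only [Fintype.card_fin] at this
    omega
  calc #C ≤ 8 * #(C.image Prod.fst) := card_le_mul_card_image C 8 fun t _ => hfiber t
    _ ≤ 8 * 3 := Nat.mul_le_mul_left 8 (card_le_univ _)
end
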